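/- arXiv:1808.06107 — 6 statements merged into one kernel-verified Lean document; each statement's English description precedes it below -/
import Mathlib

section
/- Let x ∈ ℝ^d, and let l : {1,...,K-1} → ℝ≥0 be nonnegative losses. Let S_l, S_r be finite disjoint subsets of indices, and suppose losses are monotone on the left in the sense that l(k') ≤ l(k) whenever k' < k. If for some index k the quantity λ_k = l(k) − ‖x‖²·(l(k) + Σ_{j∈S_l} l(j) − Σ_{j∈S_r} l(j)) / (1 + ‖x‖²·(1 + |S_l| + |S_r|)) is ≤ 0, then for every k' < k the corresponding quantity λ_{k'} = l(k') − ‖x‖²·(l(k') + Σ_{j∈S_l} l(j) − Σ_{j∈S_r} l(j)) / (1 + ‖x‖²·(1 + |S_l| + |S_r|)) is also ≤ 0. -/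
/-!
The candidate multiplier `t - ‖x‖² (t + C) / D` is affine in the loss `t` with slope
`1 - ‖x‖² / D ≥ 0`, because the denominator `D = 1 + ‖x‖² (1 + |S_l| + |S_r|)` is at least `‖x‖²`.
So it is monotone in `t`, and `l k' ≤ l k` carries `λ_k ≤ 0` over to `λ_{k'} ≤ 0`.
-/

lemma monotone_sub_mul_add_div (C : ℝ) {a D : ℝ} (hD : 0 < D) (haD : a ≤ D) :
    Monotone fun t : ℝ => t - a * (t + C) / D := by
  have hslope : 0 ≤ 1 - a / D := sub_nonneg.2 (div_le_one_of_le₀ haD hD.le)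
  have haffine : ∀ t : ℝ, t - a * (t + C) / D = (1 - a / D) * t - a * C / D := fun t => by
    field_simp
    ring
  intro s t hst
  simp only [haffine]
  gcongr

lemma le_one_add_mul_one_add_add {a m n : ℝ} (ha : 0 ≤ a) (hm : 0 ≤ m) (hn : 0 ≤ n) :
    a ≤ 1 + a * (1 + m + n) := by
  nlinarith [mul_nonneg ha (add_nonneg hm hn)]

theorem sca_left_correctness_general
    (d : ℕ) (x : EuclideanSpace ℝ (Fin d)) (l : ℕ → ℝ)
    (Sl Sr : Finset ℕ)
    (hmono : ∀ k' k : ℕ, k' < k → l k' ≤ l k)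
    (k : ℕ)
    (hk : l k - ‖x‖^2 * (l k + ∑ j ∈ Sl, l j - ∑ j ∈ Sr, l j) /
        (1 + ‖x‖^2 * (1 + (Sl.card : ℝ) + (Sr.card : ℝ))) ≤ 0) :
    ∀ k' < k,
      l k' - ‖x‖^2 * (l k' + ∑ j ∈ Sl, l j - ∑ j ∈ Sr, l j) /
        (1 + ‖x‖^2 * (1 + (Sl.card : ℝ) + (Sr.card : ℝ))) ≤ 0 := by
  intro k' hk'
  have hnorm : 0 ≤ ‖x‖ ^ 2 := by positivity
  have hcandidate_mono := monotone_sub_mul_add_div (∑ j ∈ Sl, l j - ∑ j ∈ Sr, l j) (by positivity)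
    (le_one_add_mul_one_add_add hnorm (Nat.cast_nonneg Sl.card) (Nat.cast_nonneg Sr.card))
  simp only [← add_sub_assoc] at hcandidate_mono
  exact (hcandidate_mono (hmono k' k hk')).trans hk

theorem sca_left_correctness
    (d : ℕ) (x : EuclideanSpace ℝ (Fin d)) (l : ℕ → ℝ)
    (hl : ∀ i, 0 ≤ l i)
    (Sl Sr : Finset ℕ) (hdisj : Disjoint Sl Sr)
    (hmono : ∀ k' k : ℕ, k' < k → l k' ≤ l k)
    (k : ℕ)
    (hk : l k - ‖x‖^2 * (l k + ∑ j ∈ Sl, l j - ∑ j ∈ Sr, l j) /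
        (1 + ‖x‖^2 * (1 + (Sl.card : ℝ) + (Sr.card : ℝ))) ≤ 0) :
    ∀ k' < k,
      l k' - ‖x‖^2 * (l k' + ∑ j ∈ Sl, l j - ∑ j ∈ Sr, l j) /
        (1 + ‖x‖^2 * (1 + (Sl.card : ℝ) + (Sr.card : ℝ))) ≤ 0 :=
  sca_left_correctness_general d x l Sl Sr hmono k hk
end

section
/- Let x ∈ ℝ^d with ‖x‖² ≥ 0, let S_l, S_r be disjoint finite index sets, let l_i > 0 for i ∈ S_l ∪ S_r, and define a = (Σ_{i∈S_l} l_i − Σ_{i∈S_r} l_i) / (1 + ‖x‖²·(|S_l| + |S_r|)). Suppose for some index k ∉ S_l the candidate multiplier l_k − ‖x‖²·(l_k + Σ_{i∈S_l} l_i − Σ_{i∈S_r} l_i)/(1 + ‖x‖²·(|S_l| + 1 + |S_r|)) ≤ 0 with l_k ≥ 0. Then l_k ≤ a·‖x‖². -/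
/-- Both sides are equivalent to `t * D ≤ n * s`. -/
theorem le_mul_add_div_add_iff {K : Type*} [Field K] [LinearOrder K] [IsStrictOrderedRing K]
    {D n s t : K} (hD : 0 < D) (hDn : 0 < D + n) :
    t ≤ n * (t + s) / (D + n) ↔ t ≤ n * s / D := by
  rw [le_div_iff₀ hDn, le_div_iff₀ hD]
  constructor <;> intro h <;> linarith

theorem excluded_index_loss_le_general
    (d : ℕ) (x : EuclideanSpace ℝ (Fin d))
    {ι : Type*} (Sl Sr : Finset ι)
    (l : ι → ℝ)
    (a : ℝ)
    (ha : a = (∑ i ∈ Sl, l i - ∑ i ∈ Sr, l i) /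
        (1 + ‖x‖^2 * ((Sl.card : ℝ) + (Sr.card : ℝ))))
    (lk : ℝ)
    (hcand : lk - ‖x‖^2 * (lk + ∑ i ∈ Sl, l i - ∑ i ∈ Sr, l i) /
        (1 + ‖x‖^2 * ((Sl.card : ℝ) + 1 + (Sr.card : ℝ))) ≤ 0) :
    lk ≤ a * ‖x‖^2 := by
  set n := ‖x‖ ^ 2
  set s := ∑ i ∈ Sl, l i - ∑ i ∈ Sr, l i
  set D := 1 + n * ((Sl.card : ℝ) + Sr.card)
  have hD : 0 < D := by positivity
  have hDn : 0 < D + n := by positivity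
  have hcand' : lk ≤ n * (lk + s) / (D + n) := by
    convert sub_nonpos.mp hcand using 2 <;> ring
  rw [ha, div_mul_eq_mul_div, mul_comm]
  exact (le_mul_add_div_add_iff hD hDn).1 hcand'

theorem excluded_index_loss_le
    (d : ℕ) (x : EuclideanSpace ℝ (Fin d))
    {ι : Type*} [DecidableEq ι] (Sl Sr : Finset ι) (hdisj : Disjoint Sl Sr)
    (l : ι → ℝ) (hlpos : ∀ i ∈ Sl ∪ Sr, 0 < l i)
    (a : ℝ)
    (ha : a = (∑ i ∈ Sl, l i - ∑ i ∈ Sr, l i) /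
        (1 + ‖x‖^2 * ((Sl.card : ℝ) + (Sr.card : ℝ))))
    (k : ι) (hk : k ∉ Sl) (lk : ℝ) (hlk : 0 ≤ lk)
    (hcand : lk - ‖x‖^2 * (lk + ∑ i ∈ Sl, l i - ∑ i ∈ Sr, l i) /
        (1 + ‖x‖^2 * ((Sl.card : ℝ) + 1 + (Sr.card : ℝ))) ≤ 0) :
    lk ≤ a * ‖x‖^2 :=
  excluded_index_loss_le_general d x Sl Sr l a ha lk hcand
end

section
/- Order preservation of thresholds under the PA ranking update: suppose θ_1 ≤ θ_2 ≤ ... ≤ θ_{K−1} are real thresholds, (y_l, y_r) is the label interval with 1 ≤ y_l ≤ y_r ≤ K, losses are l_i = 1 + θ_i − w·x for i < y_l and l_i = 1 + w·x − θ_i for i ≥ y_r, the support sets S_l ⊆ {1,...,y_l−1} and S_r ⊆ {y_r,...,K−1} are the (contiguous) sets produced by the SCA procedure (i.e., S_l = {p,...,y_l−1} and S_r = {y_r,...,q} for some p, q, with the SCA stopping conditions: the candidate multiplier of index p−1 is nonpositive and similarly for q+1), a = (Σ_{i∈S_l} l_i − Σ_{i∈S_r} l_i)/(1 + ‖x‖²(|S_l|+|S_r|)),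 and the updated thresholds are θ_i' = θ_i − l_i + a‖x‖² for i ∈ S_l, θ_i' = θ_i + l_i + a‖x‖² for i ∈ S_r, and θ_i' = θ_i otherwise. Then θ_1' ≤ θ_2' ≤ ... ≤ θ_{K−1}'. -/
/-!
On the support set `S_l` every updated threshold collapses to the common value
`w·x - 1 + a‖x‖²`, and on `S_r` to `w·x + 1 + a‖x‖²`; positivity of the multipliers says that
the update moves thresholds down on `S_l` and up on `S_r`. Thus within each block the new
thresholds are equal, a pair leaving `S_l` or entering `S_r` is ordered by
`θ'_i ≤ θ_i ≤ θ_{i+1} ≤ θ'_{i+1}`, and the two pairs entering `S_l` from below and leaving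
`S_r` upwards are exactly what the SCA stopping conditions control.
-/

open Finset

theorem le_succ_of_const_blocks {α : Type*} [Preorder α] {f g : ℕ → α} {N p s t q : ℕ} {L R : α}
    (hf : ∀ i, 1 ≤ i → i + 1 ≤ N → f i ≤ f (i + 1)) (hst : s < t)
    (hgL : ∀ i ∈ Icc p s, g i = L) (hgR : ∀ i ∈ Icc t q, g i = R)
    (hgLf : ∀ i ∈ Icc p s, g i ≤ f i) (hgRf : ∀ i ∈ Icc t q, f i ≤ g i)
    (hg : ∀ i, i ∉ Icc p s → i ∉ Icc t q → g i = f i)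
    (hpL : 1 < p → p ≤ s → f (p - 1) ≤ L) (hqR : t ≤ q → q + 1 ≤ N → R ≤ f (q + 1)) :
    ∀ i, 1 ≤ i → i + 1 ≤ N → g i ≤ g (i + 1) := by
  intro i hi hiN
  by_cases hR : i ∈ Icc t q
  · rw [hgR i hR]
    by_cases hR' : i + 1 ∈ Icc t q
    · rw [hgR _ hR']
    obtain ⟨hti, hiq⟩ := mem_Icc.1 hR
    have hqi : q = i := by rw [mem_Icc] at hR'; omega
    have hL' : i + 1 ∉ Icc p s := by rw [mem_Icc]; omega
    rw [hg _ hL' hR', ← hqi]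
    exact hqR (by omega) (by omega)
  by_cases hL : i + 1 ∈ Icc p s
  · rw [hgL _ hL]
    by_cases hL' : i ∈ Icc p s
    · rw [hgL _ hL']
    obtain ⟨hpi1, hi1s⟩ := mem_Icc.1 hL
    have hpi : p - 1 = i := by rw [mem_Icc] at hL'; omega
    rw [hg i hL' hR, ← hpi]
    exact hpL (by omega) (by omega)
  have hgi : g i ≤ f i := by
    by_cases hL' : i ∈ Icc p s
    · exact hgLf i hL'
    · exact (hg i hL' hR).le
  have hgi' : f (i + 1) ≤ g (i + 1) := by
    by_cases hR' : i + 1 ∈ Icc t q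
    · exact hgRf _ hR'
    · exact (hg _ hL hR').ge
  exact hgi.trans ((hf i hi hiN).trans hgi')

-- With `c = ‖x‖²` and `m, k` the support sizes: a nonpositive candidate multiplier for a new
-- index bounds its loss `u` by `a c` (and by `-a c` on the right).
theorem le_div_mul_of_sub_div_nonpos {c m k u S T : ℝ} (hc : 0 ≤ c) (hm : 0 ≤ m) (hk : 0 ≤ k)
    (h : u - c * (u + S - T) / (1 + c * (m + 1 + k)) ≤ 0) :
    u ≤ (S - T) / (1 + c * (m + k)) * c := by
  rw [sub_nonpos, le_div_iff₀ (by positivity)] at h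
  rw [div_mul_eq_mul_div, le_div_iff₀ (by positivity)]
  linarith

theorem le_neg_div_mul_of_add_div_nonpos {c m k u S T : ℝ} (hc : 0 ≤ c) (hm : 0 ≤ m)
    (hk : 0 ≤ k) (h : u + c * (S - u - T) / (1 + c * (m + 1 + k)) ≤ 0) :
    u ≤ -((S - T) / (1 + c * (m + k)) * c) := by
  have h' := le_div_mul_of_sub_div_nonpos (u := u) (S := T) (T := S) hc hm hk (by
    linarith [show c * (u + T - S) / (1 + c * (m + 1 + k)) =
      -(c * (S - u - T) / (1 + c * (m + 1 + k))) by ring])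
  linarith [show (T - S) / (1 + c * (m + k)) * c = -((S - T) / (1 + c * (m + k)) * c) by ring]

theorem pa_order_preservation_general
    (d K : ℕ)
    (x : EuclideanSpace ℝ (Fin d)) (wx : ℝ)
    (θ θ' l : ℕ → ℝ)
    (yl yr p q : ℕ)
    (hyl : 1 ≤ yl) (hylr : yl ≤ yr)
    (hmono : ∀ i, 1 ≤ i → i + 1 ≤ K - 1 → θ i ≤ θ (i + 1))
    (hll : ∀ i, 1 ≤ i → i ≤ yl - 1 → l i = 1 + θ i - wx)
    (hlr : ∀ i, yr ≤ i → i ≤ K - 1 → l i = 1 + wx - θ i)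
    (Sl Sr : Finset ℕ)
    (hSl : Sl = Finset.Icc p (yl - 1)) (hSr : Sr = Finset.Icc yr q)
    (hp : 1 ≤ p) (hq : q ≤ K - 1)
    (a : ℝ)
    (ha : a = (∑ i ∈ Sl, l i - ∑ i ∈ Sr, l i) /
        (1 + ‖x‖^2 * ((Sl.card : ℝ) + (Sr.card : ℝ))))
    (hpos_l : ∀ i ∈ Sl, 0 < l i - a * ‖x‖^2)
    (hpos_r : ∀ i ∈ Sr, 0 < l i + a * ‖x‖^2)
    (hstop_l : 1 ≤ p - 1 →
      l (p - 1) - ‖x‖^2 * (l (p - 1) + ∑ i ∈ Sl, l i - ∑ i ∈ Sr, l i) /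
          (1 + ‖x‖^2 * ((Sl.card : ℝ) + 1 + (Sr.card : ℝ))) ≤ 0)
    (hstop_r : q + 1 ≤ K - 1 →
      l (q + 1) + ‖x‖^2 * (∑ i ∈ Sl, l i - l (q + 1) - ∑ i ∈ Sr, l i) /
          (1 + ‖x‖^2 * ((Sl.card : ℝ) + 1 + (Sr.card : ℝ))) ≤ 0)
    (hupd_l : ∀ i ∈ Sl, θ' i = θ i - l i + a * ‖x‖^2)
    (hupd_r : ∀ i ∈ Sr, θ' i = θ i + l i + a * ‖x‖^2)
    (hupd_o : ∀ i, i ∉ Sl → i ∉ Sr → θ' i = θ i) :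
    ∀ i, 1 ≤ i → i + 1 ≤ K - 1 → θ' i ≤ θ' (i + 1) := by
  have hc : 0 ≤ ‖x‖ ^ 2 := by positivity
  have hSl0 : (0 : ℝ) ≤ Sl.card := Nat.cast_nonneg _
  have hSr0 : (0 : ℝ) ≤ Sr.card := Nat.cast_nonneg _
  have hloss_l : ∀ i ∈ Sl, l i = 1 + θ i - wx := fun i hi ↦ by
    rw [hSl, mem_Icc] at hi; exact hll i (by omega) hi.2
  have hloss_r : ∀ i ∈ Sr, l i = 1 + wx - θ i := fun i hi ↦ by
    rw [hSr, mem_Icc] at hi; exact hlr i hi.1 (by omega)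
  subst hSl hSr
  refine le_succ_of_const_blocks (L := wx - 1 + a * ‖x‖ ^ 2) (R := 1 + wx + a * ‖x‖ ^ 2) hmono
    (by omega) (fun i hi ↦ ?_) (fun i hi ↦ ?_) (fun i hi ↦ ?_) (fun i hi ↦ ?_) hupd_o ?_ ?_
  · linarith [hupd_l i hi, hloss_l i hi]
  · linarith [hupd_r i hi, hloss_r i hi]
  · linarith [hupd_l i hi, hpos_l i hi]
  · linarith [hupd_r i hi, hpos_r i hi]
  · intro hp1 hps
    have h := le_div_mul_of_sub_div_nonpos hc hSl0 hSr0 (hstop_l (by omega))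
    rw [← ha, hll (p - 1) (by omega) (by omega)] at h
    linarith
  · intro hyrq hqK
    have h := le_neg_div_mul_of_add_div_nonpos hc hSl0 hSr0 (hstop_r hqK)
    rw [← ha, hlr (q + 1) (by omega) hqK] at h
    linarith

theorem pa_order_preservation
    (d K : ℕ) (hK : 2 ≤ K)
    (x : EuclideanSpace ℝ (Fin d)) (wx : ℝ)
    (θ θ' l : ℕ → ℝ)
    (yl yr p q : ℕ)
    (hyl : 1 ≤ yl) (hylr : yl ≤ yr) (hyr : yr ≤ K)
    (hmono : ∀ i, 1 ≤ i → i + 1 ≤ K - 1 → θ i ≤ θ (i + 1))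
    (hll : ∀ i, 1 ≤ i → i ≤ yl - 1 → l i = 1 + θ i - wx)
    (hlr : ∀ i, yr ≤ i → i ≤ K - 1 → l i = 1 + wx - θ i)
    (Sl Sr : Finset ℕ)
    (hSl : Sl = Finset.Icc p (yl - 1)) (hSr : Sr = Finset.Icc yr q)
    (hp : 1 ≤ p) (hq : q ≤ K - 1)
    (a : ℝ)
    (ha : a = (∑ i ∈ Sl, l i - ∑ i ∈ Sr, l i) /
        (1 + ‖x‖^2 * ((Sl.card : ℝ) + (Sr.card : ℝ))))
    (hpos_l : ∀ i ∈ Sl, 0 < l i - a * ‖x‖^2)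
    (hpos_r : ∀ i ∈ Sr, 0 < l i + a * ‖x‖^2)
    (hstop_l : 1 ≤ p - 1 →
      l (p - 1) - ‖x‖^2 * (l (p - 1) + ∑ i ∈ Sl, l i - ∑ i ∈ Sr, l i) /
          (1 + ‖x‖^2 * ((Sl.card : ℝ) + 1 + (Sr.card : ℝ))) ≤ 0)
    (hstop_r : q + 1 ≤ K - 1 →
      l (q + 1) + ‖x‖^2 * (∑ i ∈ Sl, l i - l (q + 1) - ∑ i ∈ Sr, l i) /
          (1 + ‖x‖^2 * ((Sl.card : ℝ) + 1 + (Sr.card : ℝ))) ≤ 0)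
    (hupd_l : ∀ i ∈ Sl, θ' i = θ i - l i + a * ‖x‖^2)
    (hupd_r : ∀ i ∈ Sr, θ' i = θ i + l i + a * ‖x‖^2)
    (hupd_o : ∀ i, i ∉ Sl → i ∉ Sr → θ' i = θ i) :
    ∀ i, 1 ≤ i → i + 1 ≤ K - 1 → θ' i ≤ θ' (i + 1) :=
  pa_order_preservation_general d K x wx θ θ' l yl yr p q hyl hylr hmono hll hlr Sl Sr hSl hSr hp hq
    a ha hpos_l hpos_r hstop_l hstop_r hupd_l hupd_r hupd_o
end

section
/- In the PA-I update, if two consecutive left-support indices k, k+1 ∈ S_l have multipliers λ_k = min(C, l_k − a‖x‖²) and λ_{k+1} = min(C, l_{k+1} − a‖x‖²), where l_k = 1 + θ_k − w·x and l_{k+1} = 1 + θ_{k+1} − w·x with θ_k ≤ θ_{k+1} (so l_k ≤ l_{k+1}), then the updated thresholds θ_k' = θ_k − λ_k and θ_{k+1}' = θ_{k+1} − λ_{k+1} satisfy θ_k' ≤ θ_{k+1}'. -/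
/-! With `c := 1 - w·x - a‖x‖²`, the updated threshold is
`θ - min C (θ + c) = max (θ - C) (-c)`, a monotone function of `θ`. -/

section

variable {α : Type*} [AddCommGroup α] [LinearOrder α] [IsOrderedAddMonoid α]

theorem sub_min_add_eq_max (C c θ : α) : θ - min C (θ + c) = max (θ - C) (-c) := by
  rcases le_total C (θ + c) with h | h
  · rw [min_eq_left h, max_eq_left (neg_le_sub_iff_le_add.2 h)]
  · have hmax : θ - C ≤ -c := by rwa [sub_le_iff_le_add, neg_add_eq_sub, le_sub_iff_add_le]
    rw [min_eq_right h, max_eq_right hmax]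
    abel

theorem monotone_sub_min_add (C c : α) : Monotone fun θ : α => θ - min C (θ + c) := by
  intro θ θ' hθ
  simp only [sub_min_add_eq_max]
  exact max_le_max_right _ (sub_le_sub_right hθ C)

end

theorem paI_order_consecutive_support_general
    (d : ℕ) (x : EuclideanSpace ℝ (Fin d))
    (C a wx θk θk1 lk lk1 lamk lamk1 : ℝ)
    (hθ : θk ≤ θk1)
    (hlk : lk = 1 + θk - wx) (hlk1 : lk1 = 1 + θk1 - wx)
    (hlamk : lamk = min C (lk - a * ‖x‖^2))
    (hlamk1 : lamk1 = min C (lk1 - a * ‖x‖^2)) :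
    θk - lamk ≤ θk1 - lamk1 := by
  have hshift : ∀ θ, 1 + θ - wx - a * ‖x‖ ^ 2 = θ + (1 - wx - a * ‖x‖ ^ 2) :=
    fun θ => by ring
  subst hlk hlk1 hlamk hlamk1
  rw [hshift, hshift]
  exact monotone_sub_min_add C (1 - wx - a * ‖x‖ ^ 2) hθ

theorem paI_order_consecutive_support
    (d : ℕ) (x : EuclideanSpace ℝ (Fin d))
    (C a wx θk θk1 lk lk1 lamk lamk1 : ℝ)
    (hC : 0 < C)
    (hθ : θk ≤ θk1)
    (hlk : lk = 1 + θk - wx) (hlk1 : lk1 = 1 + θk1 - wx)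
    (hlamk : lamk = min C (lk - a * ‖x‖^2))
    (hlamk1 : lamk1 = min C (lk1 - a * ‖x‖^2))
    (hlamkpos : 0 < lamk) (hlamk1pos : 0 < lamk1) :
    θk - lamk ≤ θk1 - lamk1 :=
  paI_order_consecutive_support_general d x C a wx θk θk1 lk lk1 lamk lamk1 hθ hlk hlk1 hlamk hlamk1
end

section
/- Single-trial lower bound on the potential decrease for PA-II: let x ∈ ℝ^d, C > 0, let S_l, S_r be disjoint finite sets with losses l_i ≥ 0 (i ∈ S_l ∪ S_r) and competitor losses l_i* ≥ 0, set α² = 1/(2C), a = (Σ_{S_l} l_i − Σ_{S_r} l_i)/(1 + 1/(2C) + ‖x‖²(|S_l|+|S_r|)), λ_i = (l_i − a‖x‖²)/(1 + 1/(2C)) for i ∈ S_l, μ_i = (l_i + a‖x‖²)/(1 + 1/(2C)) for i ∈ S_r. Then −a²‖x‖² − Σ_{S_l} λ_i² − Σ_{S_r} μ_i² + Σ_{S_l} 2λ_i(l_i − l_i*) + Σ_{S_r} 2μ_i(l_i − l_i*) ≥ (Σ_{i∈S_l∪S_r} l_i²)/(1 + 1/(2C) + ‖x‖²(|S_l|+|S_r|))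 − 2C·Σ_{i∈S_l∪S_r} (l_i*)². -/
/-!
Since `1 + 1/(2C) = 1 + α²`, the AM-GM bound `2 g l* ≤ g²/(2C) + 2C l*²` turns each summand
`2 g (l - l*) - g²` into `2 g l - (1 + 1/(2C)) g² - 2C l*²`; for `g = (l ∓ a‖x‖²)/(1 + 1/(2C))`
this is `(l² - a²‖x‖⁴)/(1 + 1/(2C)) - 2C l*²`. What remains is a scalar inequality in `a`, which
after clearing denominators is `(a D)² ≤ (|S_l| + |S_r|) Σ l²` for the denominator `D` of `a`,
i.e. Cauchy–Schwarz for the signed sum `a D = Σ_{S_l} l - Σ_{S_r} l`.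
-/

open Finset

theorem sq_sum_sub_sum_le_card_add_card_mul_sum_sq {ι R : Type*} [DecidableEq ι]
    [CommRing R] [LinearOrder R] [IsStrictOrderedRing R]
    {s t : Finset ι} (hst : Disjoint s t) (f : ι → R) :
    (∑ i ∈ s, f i - ∑ i ∈ t, f i) ^ 2 ≤ (#s + #t) * ∑ i ∈ s ∪ t, f i ^ 2 := by
  set g : ι → R := fun i ↦ if i ∈ s then f i else -f i
  have hsum : ∑ i ∈ s ∪ t, g i = ∑ i ∈ s, f i - ∑ i ∈ t, f i := by
    rw [sum_union hst, sub_eq_add_neg, ← sum_neg_distrib]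
    congr 1
    · exact sum_congr rfl fun i hi ↦ if_pos hi
    · exact sum_congr rfl fun i hi ↦ if_neg (disjoint_right.mp hst hi)
  have hsq : ∀ i, g i ^ 2 = f i ^ 2 := fun i ↦ by
    simp only [g]
    split_ifs <;> ring
  simpa [hsum, hsq, card_union_of_disjoint hst] using
    sq_sum_le_card_mul_sum_sq (s := s ∪ t) (f := g)

theorem paII_term_lower_bound {C : ℝ} (hC : 0 < C) (l t b g : ℝ)
    (hg : g = (l - b) / (1 + 1 / (2 * C))) :
    (l ^ 2 - b ^ 2) / (1 + 1 / (2 * C)) - 2 * C * t ^ 2 ≤ 2 * g * (l - t) - g ^ 2 := by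
  have amgm : 2 * g * t ≤ g ^ 2 / (2 * C) + 2 * C * t ^ 2 := by
    rw [← sub_nonneg]
    have hsq : g ^ 2 / (2 * C) + 2 * C * t ^ 2 - 2 * g * t = (g - 2 * C * t) ^ 2 / (2 * C) := by
      field_simp
      ring
    rw [hsq]
    positivity
  have hgain : 2 * g * l - (1 + 1 / (2 * C)) * g ^ 2 = (l ^ 2 - b ^ 2) / (1 + 1 / (2 * C)) := by
    subst hg
    field_simp
    ring
  have hsplit : (1 + 1 / (2 * C)) * g ^ 2 = g ^ 2 + g ^ 2 / (2 * C) := by ring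
  linarith

theorem paII_sum_lower_bound {ι : Type*} {C : ℝ} (hC : 0 < C) (s : Finset ι)
    (l t g : ι → ℝ) (b : ℝ) (hg : ∀ i ∈ s, g i = (l i - b) / (1 + 1 / (2 * C))) :
    (∑ i ∈ s, l i ^ 2 - #s * b ^ 2) / (1 + 1 / (2 * C)) - 2 * C * ∑ i ∈ s, t i ^ 2 ≤
      -∑ i ∈ s, g i ^ 2 + ∑ i ∈ s, 2 * g i * (l i - t i) := by
  have hterms := sum_le_sum fun i hi ↦ paII_term_lower_bound hC (l i) (t i) b (g i) (hg i hi)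
  simp only [sum_sub_distrib, ← sum_div, ← mul_sum, sum_const, nsmul_eq_mul] at hterms
  linarith

theorem paII_scalar_bound {β h n a Q : ℝ} (hβ : 0 < β) (hh : 0 ≤ h) (hn : 0 ≤ n)
    (hQ : (a * (β + h * n)) ^ 2 ≤ n * Q) :
    Q / (β + h * n) ≤ -a ^ 2 * h + (Q - n * (a * h) ^ 2) / β := by
  have hD : 0 < β + h * n := by positivity
  rw [← sub_nonneg]
  have hgap : -a ^ 2 * h + (Q - n * (a * h) ^ 2) / β - Q / (β + h * n) =
      h * (n * Q - (a * (β + h * n)) ^ 2) / (β * (β + h * n)) := by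
    field_simp
    ring
  rw [hgap]
  exact div_nonneg (mul_nonneg hh (sub_nonneg.mpr hQ)) (by positivity)

theorem paII_single_trial_bound_general
    (d : ℕ) (x : EuclideanSpace ℝ (Fin d)) (C : ℝ) (hC : 0 < C)
    {ι : Type*} [DecidableEq ι] (Sl Sr : Finset ι) (hdisj : Disjoint Sl Sr)
    (l lstar : ι → ℝ)
    (a : ℝ)
    (ha : a = (∑ i ∈ Sl, l i - ∑ i ∈ Sr, l i) /
        (1 + 1 / (2 * C) + ‖x‖^2 * ((Sl.card : ℝ) + (Sr.card : ℝ))))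
    (lam mu : ι → ℝ)
    (hlam : ∀ i ∈ Sl, lam i = (l i - a * ‖x‖^2) / (1 + 1 / (2 * C)))
    (hmu : ∀ i ∈ Sr, mu i = (l i + a * ‖x‖^2) / (1 + 1 / (2 * C))) :
    (∑ i ∈ Sl ∪ Sr, (l i)^2) / (1 + 1 / (2 * C) + ‖x‖^2 * ((Sl.card : ℝ) + (Sr.card : ℝ)))
        - 2 * C * ∑ i ∈ Sl ∪ Sr, (lstar i)^2 ≤
      -a^2 * ‖x‖^2 - ∑ i ∈ Sl, (lam i)^2 - ∑ i ∈ Sr, (mu i)^2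
        + ∑ i ∈ Sl, 2 * lam i * (l i - lstar i)
        + ∑ i ∈ Sr, 2 * mu i * (l i - lstar i) := by
  have hD : 0 < 1 + 1 / (2 * C) + ‖x‖ ^ 2 * ((#Sl : ℝ) + #Sr) := by positivity
  have hCS : (a * (1 + 1 / (2 * C) + ‖x‖ ^ 2 * ((#Sl : ℝ) + #Sr))) ^ 2 ≤
      (#Sl + #Sr) * ∑ i ∈ Sl ∪ Sr, l i ^ 2 := by
    rw [ha, div_mul_cancel₀ _ hD.ne']
    exact sq_sum_sub_sum_le_card_add_card_mul_sum_sq hdisj l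
  have hscalar := paII_scalar_bound (by positivity) (sq_nonneg ‖x‖) (by positivity) hCS
  have hleft := paII_sum_lower_bound hC Sl l lstar lam _ hlam
  have hright := paII_sum_lower_bound hC Sr l lstar mu (-(a * ‖x‖ ^ 2))
    fun i hi ↦ by rw [hmu i hi, sub_neg_eq_add]
  simp only [sum_union hdisj] at hscalar ⊢
  have hsplit : (∑ i ∈ Sl, l i ^ 2 + ∑ i ∈ Sr, l i ^ 2 - (#Sl + #Sr) * (a * ‖x‖ ^ 2) ^ 2) /
      (1 + 1 / (2 * C)) = (∑ i ∈ Sl, l i ^ 2 - #Sl * (a * ‖x‖ ^ 2) ^ 2) / (1 + 1 / (2 * C)) +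
        (∑ i ∈ Sr, l i ^ 2 - #Sr * (-(a * ‖x‖ ^ 2)) ^ 2) / (1 + 1 / (2 * C)) := by
    ring
  linarith

theorem paII_single_trial_bound
    (d : ℕ) (x : EuclideanSpace ℝ (Fin d)) (C : ℝ) (hC : 0 < C)
    {ι : Type*} [DecidableEq ι] (Sl Sr : Finset ι) (hdisj : Disjoint Sl Sr)
    (l lstar : ι → ℝ)
    (hl : ∀ i ∈ Sl ∪ Sr, 0 ≤ l i) (hlstar : ∀ i ∈ Sl ∪ Sr, 0 ≤ lstar i)
    (a : ℝ)
    (ha : a = (∑ i ∈ Sl, l i - ∑ i ∈ Sr, l i) /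
        (1 + 1 / (2 * C) + ‖x‖^2 * ((Sl.card : ℝ) + (Sr.card : ℝ))))
    (lam mu : ι → ℝ)
    (hlam : ∀ i ∈ Sl, lam i = (l i - a * ‖x‖^2) / (1 + 1 / (2 * C)))
    (hmu : ∀ i ∈ Sr, mu i = (l i + a * ‖x‖^2) / (1 + 1 / (2 * C))) :
    (∑ i ∈ Sl ∪ Sr, (l i)^2) / (1 + 1 / (2 * C) + ‖x‖^2 * ((Sl.card : ℝ) + (Sr.card : ℝ)))
        - 2 * C * ∑ i ∈ Sl ∪ Sr, (lstar i)^2 ≤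
      -a^2 * ‖x‖^2 - ∑ i ∈ Sl, (lam i)^2 - ∑ i ∈ Sr, (mu i)^2
        + ∑ i ∈ Sl, 2 * lam i * (l i - lstar i)
        + ∑ i ∈ Sr, 2 * mu i * (l i - lstar i) :=
  paII_single_trial_bound_general d x C hC Sl Sr hdisj l lstar a ha lam mu hlam hmu
end

section
/- For the ranking classifier h(x) = min{i ∈ {1,...,K} : f(x) − θ_i < 0} with θ_1 ≤ ... ≤ θ_{K−1} and θ_K = +∞: h(x) = y if and only if θ_{y−1} ≤ f(x) < θ_y (with the convention θ_0 = −∞). Moreover, L_IMC(f(x), θ, y_l, y_r) = 0 implies θ_i ≤ f(x) − 1 for all i ≤ y_l − 1 and f(x) ≤ θ_i − 1 for all i ≥ y_r, and hence y_l ≤ h(x) ≤ y_r. -/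
/-!
The prediction `h(x)` is the least `i ≥ 1` at which `f(x) < θ_i` (or `i = K`), so every `θ_i`
with `i < h(x)` lies at or below `f(x)`; by monotonicity of the thresholds this is equivalent to
`θ_{y-1} ≤ f(x) < θ_y`. A hinge sum vanishes iff every hinge is inactive, so zero loss puts the
thresholds below `y_l` at least a margin `1` under `f(x)` and those from `y_r` on a margin `1`
above it, which squeezes `h(x)` into `[y_l, y_r]`.
-/

theorem Finset.sum_max_zero_eq_zero_iff {ι M : Type*} [AddCommMonoid M] [LinearOrder M]
    [IsOrderedAddMonoid M] {s : Finset ι} {g : ι → M} :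
    ∑ i ∈ s, max 0 (g i) = 0 ↔ ∀ i ∈ s, g i ≤ 0 := by
  rw [Finset.sum_eq_zero_iff_of_nonneg fun i _ => le_max_left 0 (g i)]
  simp only [max_eq_left_iff]

/-- `θ_K = ∞` is encoded by the disjunct `i = K`. -/
noncomputable def rankPrediction (K : ℕ) (fx : ℝ) (θ : ℕ → ℝ) : ℕ :=
  sInf {i : ℕ | 1 ≤ i ∧ (i = K ∨ fx < θ i)}

def imcLoss (K : ℕ) (fx : ℝ) (θ : ℕ → ℝ) (yl yr : ℕ) : ℝ :=
  (∑ i ∈ Finset.Icc 1 (yl - 1), max 0 (1 - fx + θ i))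
    + ∑ i ∈ Finset.Icc yr (K - 1), max 0 (1 + fx - θ i)

section

variable {K : ℕ} {fx : ℝ} {θ : ℕ → ℝ}

theorem rankPrediction_spec (hK : 1 ≤ K) :
    1 ≤ rankPrediction K fx θ ∧
      (rankPrediction K fx θ = K ∨ fx < θ (rankPrediction K fx θ)) :=
  Nat.sInf_mem (s := {i : ℕ | 1 ≤ i ∧ (i = K ∨ fx < θ i)}) ⟨K, hK, Or.inl rfl⟩

theorem rankPrediction_le {y : ℕ} (hy : 1 ≤ y) (h : y = K ∨ fx < θ y) :
    rankPrediction K fx θ ≤ y :=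
  Nat.sInf_le ⟨hy, h⟩

theorem le_of_lt_rankPrediction {i : ℕ} (hi : 1 ≤ i) (hlt : i < rankPrediction K fx θ) :
    θ i ≤ fx := by
  have hnot := Nat.notMem_of_lt_sInf hlt
  simp only [Set.mem_ofPred_eq, not_and, not_or, not_lt] at hnot
  exact (hnot hi).2

theorem le_rankPrediction {y : ℕ} (hyK : y ≤ K) (h : ∀ i, 1 ≤ i → i < y → θ i ≤ fx) :
    y ≤ rankPrediction K fx θ := by
  by_contra! hlt
  obtain ⟨hpos, hK | hfx⟩ := rankPrediction_spec (K := K) (fx := fx) (θ := θ) (by omega)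
  · omega
  · exact (h _ hpos hlt).not_gt hfx

theorem rankPrediction_eq_iff (hmono : ∀ i j, 1 ≤ i → i ≤ j → j ≤ K - 1 → θ i ≤ θ j)
    {y : ℕ} (hy : 1 ≤ y) (hyK : y ≤ K) :
    rankPrediction K fx θ = y ↔ (2 ≤ y → θ (y - 1) ≤ fx) ∧ (y ≤ K - 1 → fx < θ y) := by
  constructor
  · rintro rfl
    refine ⟨fun h2 => le_of_lt_rankPrediction (K := K) (by omega) (by omega), fun hlt => ?_⟩
    exact (rankPrediction_spec (by omega)).2.resolve_left (by omega)
  · rintro ⟨hbelow, habove⟩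
    refine le_antisymm (rankPrediction_le hy ?_) (le_rankPrediction hyK fun i hi hiy => ?_)
    · rcases eq_or_lt_of_le hyK with hyK | hyK
      exacts [Or.inl hyK, Or.inr (habove (by omega))]
    · exact (hmono i (y - 1) hi (by omega) (by omega)).trans (hbelow (by omega))

theorem imcLoss_eq_zero_iff {yl yr : ℕ} :
    imcLoss K fx θ yl yr = 0 ↔
      (∀ i, 1 ≤ i → i ≤ yl - 1 → θ i ≤ fx - 1) ∧ (∀ i, yr ≤ i → i ≤ K - 1 → fx + 1 ≤ θ i) := by
  have hnonneg {s : Finset ℕ} {g : ℕ → ℝ} : 0 ≤ ∑ i ∈ s, max 0 (g i) :=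
    Finset.sum_nonneg fun i _ => le_max_left 0 (g i)
  rw [imcLoss, add_eq_zero_iff_of_nonneg hnonneg hnonneg, Finset.sum_max_zero_eq_zero_iff,
    Finset.sum_max_zero_eq_zero_iff]
  simp only [Finset.mem_Icc, and_imp]
  refine and_congr (forall_congr' fun i => ?_) (forall_congr' fun i => ?_) <;>
    refine imp_congr_right fun _ => imp_congr_right fun _ => ?_ <;>
    constructor <;> intro <;> linarith

end

theorem ranking_prediction_characterization_general
    (K : ℕ)
    (fx : ℝ) (θ : ℕ → ℝ)
    (hmono : ∀ i j, 1 ≤ i → i ≤ j → j ≤ K - 1 → θ i ≤ θ j)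
    (yl yr : ℕ) (hyl : 1 ≤ yl) (hylr : yl ≤ yr) (hyr : yr ≤ K)
    (hx : ℕ)
    (hhx : hx = sInf {i : ℕ | 1 ≤ i ∧ (i = K ∨ fx < θ i)}) :
    (∀ y, 1 ≤ y → y ≤ K →
      (hx = y ↔ ((2 ≤ y → θ (y - 1) ≤ fx) ∧ (y ≤ K - 1 → fx < θ y)))) ∧
    ((∑ i ∈ Finset.Icc 1 (yl - 1), max 0 (1 - fx + θ i))
        + (∑ i ∈ Finset.Icc yr (K - 1), max 0 (1 + fx - θ i)) = 0 →
      (∀ i, 1 ≤ i → i ≤ yl - 1 → θ i ≤ fx - 1) ∧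
      (∀ i, yr ≤ i → i ≤ K - 1 → fx + 1 ≤ θ i) ∧
      yl ≤ hx ∧ hx ≤ yr) := by
  change hx = rankPrediction K fx θ at hhx
  subst hhx
  refine ⟨fun y hy hyK => rankPrediction_eq_iff hmono hy hyK, fun hloss => ?_⟩
  obtain ⟨hlow, hhigh⟩ := imcLoss_eq_zero_iff.mp hloss
  refine ⟨hlow, hhigh, le_rankPrediction (by omega) fun i hi hiyl => ?_, ?_⟩
  · linarith [hlow i hi (by omega)]
  · refine rankPrediction_le (by omega) ?_
    rcases eq_or_lt_of_le hyr with hyr | hyr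
    exacts [Or.inl hyr, Or.inr (by linarith [hhigh yr le_rfl (by omega)])]

/-- The ranking classifier `h(x) = min {i ∈ {1,…,K} : f(x) - θ_i < 0}`, with the
convention `θ_K = ∞` (so the index `K` always satisfies the condition). -/
theorem ranking_prediction_characterization
    (K : ℕ) (hK : 2 ≤ K)
    (fx : ℝ) (θ : ℕ → ℝ)
    (hmono : ∀ i j, 1 ≤ i → i ≤ j → j ≤ K - 1 → θ i ≤ θ j)
    (yl yr : ℕ) (hyl : 1 ≤ yl) (hylr : yl ≤ yr) (hyr : yr ≤ K)
    (hx : ℕ)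
    (hhx : hx = sInf {i : ℕ | 1 ≤ i ∧ (i = K ∨ fx < θ i)}) :
    (∀ y, 1 ≤ y → y ≤ K →
      (hx = y ↔ ((2 ≤ y → θ (y - 1) ≤ fx) ∧ (y ≤ K - 1 → fx < θ y)))) ∧
    ((∑ i ∈ Finset.Icc 1 (yl - 1), max 0 (1 - fx + θ i))
        + (∑ i ∈ Finset.Icc yr (K - 1), max 0 (1 + fx - θ i)) = 0 →
      (∀ i, 1 ≤ i → i ≤ yl - 1 → θ i ≤ fx - 1) ∧
      (∀ i, yr ≤ i → i ≤ K - 1 → fx + 1 ≤ θ i) ∧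
      yl ≤ hx ∧ hx ≤ yr) :=
  ranking_prediction_characterization_general K fx θ hmono yl yr hyl hylr hyr hx hhx
end
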